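/- arXiv:1205.0130 — 2 statements merged into one kernel-verified Lean document; each statement's English description precedes it below -/
import Mathlib

section
/- Let G be a bipartite graph with parts X (|X| = m, all degrees l) and Y (|Y| = n, all degrees k), m ≥ n, ml = nk. Then for every integer t with l·⌈m/l⌉ ≤ t ≤ ml, there exists a proper edge t-coloring of G interval on X. -/
/-- A proper edge `t`-coloring of the bipartite graph with parts `α`, `β` and
edge set `E ⊆ α × β`: colors lie in `{1,…,t}`, all colors are used, and
adjacent edges (sharing an endpoint) get distinct colors. -/
def IsProperEdgeColoring {α β : Type*} (E : Finset (α × β)) (t : ℕ)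
    (φ : α × β → ℕ) : Prop :=
  (∀ e ∈ E, φ e ∈ Finset.Icc 1 t) ∧
  (∀ c ∈ Finset.Icc 1 t, ∃ e ∈ E, φ e = c) ∧
  (∀ e ∈ E, ∀ e' ∈ E, e ≠ e' → (e.1 = e'.1 ∨ e.2 = e'.2) → φ e ≠ φ e')

/-- The spectrum of a vertex `x` of the part `α`: the set of colors on edges
incident with `x`. -/
def spectX {α β : Type*} [DecidableEq α] (E : Finset (α × β))
    (φ : α × β → ℕ) (x : α) : Finset ℕ :=
  (E.filter fun e => e.1 = x).image φ

/-- The spectrum of a vertex `y` of the part `β`. -/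
def spectY {α β : Type*} [DecidableEq β] (E : Finset (α × β))
    (φ : α × β → ℕ) (y : β) : Finset ℕ :=
  (E.filter fun e => e.2 = y).image φ

/-- Degree of a vertex of the part `α`. -/
def degX {α β : Type*} [DecidableEq α] (E : Finset (α × β)) (x : α) : ℕ :=
  (E.filter fun e => e.1 = x).card

/-- Degree of a vertex of the part `β`. -/
def degY {α β : Type*} [DecidableEq β] (E : Finset (α × β)) (y : β) : ℕ :=
  (E.filter fun e => e.2 = y).card

/-- A finite set of naturals is an interval: nonempty and consisting of
consecutive integers. -/
def IsIntervalFinset (S : Finset ℕ) : Prop :=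
  S.Nonempty ∧ ∀ a ∈ S, ∀ b ∈ S, ∀ c, a ≤ c → c ≤ b → c ∈ S

/-- The coloring is interval in every vertex of the part `α` (every vertex
with at least one incident edge has an interval spectrum). -/
def IntervalOnX {α β : Type*} [DecidableEq α] (E : Finset (α × β))
    (φ : α × β → ℕ) : Prop :=
  ∀ x : α, (spectX E φ x).Nonempty → IsIntervalFinset (spectX E φ x)

/-- The coloring is interval in every vertex of the part `β`. -/
def IntervalOnY {α β : Type*} [DecidableEq β] (E : Finset (α × β))
    (φ : α × β → ℕ) : Prop :=
  ∀ y : β, (spectY E φ y).Nonempty → IsIntervalFinset (spectY E φ y)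

/-- Maximum degree of the bipartite graph. -/
def maxDeg {α β : Type*} [Fintype α] [Fintype β] [DecidableEq α] [DecidableEq β]
    (E : Finset (α × β)) : ℕ :=
  max (Finset.univ.sup (degX E)) (Finset.univ.sup (degY E))

/-!
Write `t = l q + d` with `d < l` and split `X` into `q` groups of at most `l` vertices (the residue
classes of an enumeration modulo `q`). Inside one group every `y` has degree at most `l`, so by
König's theorem the group's edges can be coloured properly with `1, …, l`, and then every `x` of
the group sees all of these colours. Stacking the groups on disjoint blocks of `l` colours uses
`l q` colours. The remaining `d` colours come from one vertex `u` of the bottom group: its colours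
`c ≤ d` are moved to `c + l`, so that its spectrum becomes `[d + 1, d + l]`; no other vertex of the
group uses a colour above `l`, and a second vertex of the group still covers `[1, d]`.

König's theorem is proved by induction on the maximum degree, removing a matching that covers
every vertex of maximum degree; Hall's theorem, applied after padding `X` with dummy vertices,
provides that matching.
-/

open Finset

def IsProperOn {α β : Type*} (F : Finset (α × β)) (ψ : α × β → ℕ) : Prop :=
  ∀ e ∈ F, ∀ e' ∈ F, e ≠ e' → (e.1 = e'.1 ∨ e.2 = e'.2) → ψ e ≠ ψ e'

lemma card_le_card_of_fiber_bounds {γ ι κ : Type*} [DecidableEq ι] [DecidableEq κ]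
    (F : Finset γ) (p : γ → ι) (q : γ → κ) {A : Finset ι} {B : Finset κ} {r : ℕ} (hr : 0 < r)
    (hA : ∀ a ∈ A, r ≤ #{e ∈ F | p e = a}) (hB : ∀ b ∈ B, #{e ∈ F | q e = b} ≤ r)
    (hAB : ∀ e ∈ F, p e ∈ A → q e ∈ B) : #A ≤ #B := by
  refine Nat.le_of_mul_le_mul_right ?_ hr
  calc #A * r = ∑ _a ∈ A, r := by rw [sum_const, smul_eq_mul]
    _ ≤ ∑ a ∈ A, #{e ∈ F | p e = a} := sum_le_sum hA
    _ = #{e ∈ F | p e ∈ A} := sum_card_fiberwise_eq_card_filter _ _ _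
    _ ≤ #{e ∈ F | q e ∈ B} := card_le_card fun e he => by
      rw [mem_filter] at he ⊢
      exact ⟨he.1, hAB e he.1 he.2⟩
    _ = ∑ b ∈ B, #{e ∈ F | q e = b} := (sum_card_fiberwise_eq_card_filter _ _ _).symm
    _ ≤ ∑ _b ∈ B, r := sum_le_sum hB
    _ = #B * r := by rw [sum_const, smul_eq_mul]

lemma exists_injective_covering {ι β : Type*} [Fintype ι] [DecidableEq ι] [DecidableEq β]
    (t : ι → Finset β) (Z : Finset β)
    (hall : ∀ T : Finset ι, #T ≤ #(T.biUnion t))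
    (hZ : ∀ T : Finset ι, #(Z \ T.biUnion t) ≤ #Tᶜ) :
    ∃ f : ι → β, Function.Injective f ∧ (∀ i, f i ∈ t i) ∧ ∀ z ∈ Z, ∃ i, f i = z := by
  set Y := univ.biUnion t
  have hιY : Fintype.card ι ≤ #Y := hall univ
  have hZY : Z ⊆ Y := by simpa using hZ univ
  -- The dummies, adjacent to `Y \ Z`, force a Hall matching of the padded family onto all of `Y`.
  let t' : ι ⊕ Fin (#Y - Fintype.card ι) → Finset β := Sum.elim t fun _ => Y \ Z
  have hall' (s : Finset (ι ⊕ Fin (#Y - Fintype.card ι))) : #s ≤ #(s.biUnion t') := by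
    have hleft : s.toLeft.biUnion t ⊆ s.biUnion t' := fun y hy => by
      obtain ⟨i, hi, hy⟩ := mem_biUnion.1 hy
      exact mem_biUnion.2 ⟨.inl i, mem_toLeft.1 hi, hy⟩
    have hs := card_toLeft_add_card_toRight (u := s)
    rcases s.toRight.eq_empty_or_nonempty with hR | ⟨j, hj⟩
    · rw [hR, card_empty] at hs
      have := hall s.toLeft
      have := card_le_card hleft
      omega
    · have hcover : Y \ (Z \ s.toLeft.biUnion t) ⊆ s.biUnion t' := fun y hy => by
        rw [mem_sdiff, mem_sdiff, not_and_not_right] at hy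
        by_cases hyZ : y ∈ Z
        · exact hleft (hy.2 hyZ)
        · exact mem_biUnion.2 ⟨.inr j, mem_toRight.1 hj, mem_sdiff.2 ⟨hy.1, hyZ⟩⟩
      have hR : #s.toRight ≤ #Y - Fintype.card ι := card_le_univ _ |>.trans (by simp)
      have h1 := card_le_card hcover
      rw [card_sdiff_of_subset (sdiff_subset.trans hZY)] at h1
      have h2 := hZ s.toLeft
      rw [card_compl] at h2
      have := card_le_univ s.toLeft
      omega
  obtain ⟨g, hg, hgt⟩ := (all_card_le_biUnion_card_iff_exists_injective t').1 hall'
  have himage : univ.image g = Y := by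
    refine eq_of_subset_of_card_le (fun y hy => ?_) ?_
    · obtain ⟨j, -, rfl⟩ := mem_image.1 hy
      cases j with
      | inl i => exact subset_biUnion_of_mem t (mem_univ i) (hgt (.inl i))
      | inr j => exact (mem_sdiff.1 (hgt (.inr j))).1
    · rw [card_image_of_injective _ hg, card_univ, Fintype.card_sum, Fintype.card_fin]
      omega
  refine ⟨g ∘ Sum.inl, hg.comp Sum.inl_injective, fun i => hgt (.inl i), fun z hz => ?_⟩
  obtain ⟨j, -, rfl⟩ := mem_image.1 (himage ▸ hZY hz)
  cases j with
  | inl i => exact ⟨i, rfl⟩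
  | inr j => exact absurd hz (mem_sdiff.1 (hgt (.inr j))).2

section Konig

variable {α β : Type*} [DecidableEq α] [DecidableEq β]

lemma degX_sdiff {F M : Finset (α × β)} (hMF : M ⊆ F) (x : α) :
    degX (F \ M) x = degX F x - degX M x := by
  rw [degX, degX, degX, ← card_sdiff_of_subset (filter_subset_filter _ hMF)]
  congr 1
  ext e
  simp only [mem_filter, mem_sdiff]
  tauto

lemma degY_sdiff {F M : Finset (α × β)} (hMF : M ⊆ F) (y : β) :
    degY (F \ M) y = degY F y - degY M y := by
  rw [degY, degY, degY, ← card_sdiff_of_subset (filter_subset_filter _ hMF)]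
  congr 1
  ext e
  simp only [mem_filter, mem_sdiff]
  tauto

lemma exists_injective_nbhd_covering_maxDegree (F : Finset (α × β)) {r : ℕ} (hr : 0 < r)
    (hx : ∀ e ∈ F, degX F e.1 = r) (hy : ∀ y, degY F y ≤ r) :
    ∃ f : F.image Prod.fst → β, Function.Injective f ∧
      (∀ x : F.image Prod.fst, ((x : α), f x) ∈ F) ∧ ∀ y, degY F y = r → ∃ x, f x = y := by
  set W := F.image Prod.fst
  have hW : ∀ x : W, degX F x = r := fun ⟨_, hx'⟩ => by
    obtain ⟨e, he, rfl⟩ := mem_image.1 hx'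
    exact hx e he
  let nbhd : W → Finset β := fun x => {e ∈ F | e.1 = (x : α)}.image Prod.snd
  have mem_nbhd {x : W} {y : β} : y ∈ nbhd x ↔ ((x : α), y) ∈ F := by
    simp only [nbhd, mem_image, mem_filter]
    constructor
    · rintro ⟨e, ⟨he, hex⟩, rfl⟩
      rwa [← hex]
    · exact fun h => ⟨_, ⟨h, rfl⟩, rfl⟩
  set Z := {y ∈ F.image Prod.snd | degY F y = r}
  have hall (T : Finset W) : #T ≤ #(T.biUnion nbhd) := by
    rw [← card_map (Function.Embedding.subtype _)]
    refine card_le_card_of_fiber_bounds F Prod.fst Prod.snd hr ?_ (fun y _ => hy y) ?_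
    · intro a ha
      obtain ⟨x, -, rfl⟩ := mem_map.1 ha
      exact (hW x).ge
    · intro e he h
      obtain ⟨x, hx, hxe⟩ := mem_map.1 h
      have hxe : (x : α) = e.1 := hxe
      exact mem_biUnion.2 ⟨x, hx, mem_nbhd.2 (by rw [hxe]; exact he)⟩
  have hdefect (T : Finset W) : #(Z \ T.biUnion nbhd) ≤ #Tᶜ := by
    rw [← card_map (Function.Embedding.subtype _)]
    refine card_le_card_of_fiber_bounds F Prod.snd Prod.fst hr ?_ ?_ ?_
    · intro y hy
      exact (mem_filter.1 (mem_sdiff.1 hy).1).2.ge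
    · intro a ha
      obtain ⟨x, -, rfl⟩ := mem_map.1 ha
      exact (hW x).le
    · intro e he h
      refine mem_map.2 ⟨⟨e.1, mem_image_of_mem _ he⟩, mem_compl.2 fun hT => ?_, rfl⟩
      exact (mem_sdiff.1 h).2 (mem_biUnion.2 ⟨_, hT, mem_nbhd.2 he⟩)
  obtain ⟨f, hf, hfN, hfZ⟩ := exists_injective_covering nbhd Z hall hdefect
  refine ⟨f, hf, fun x => mem_nbhd.1 (hfN x), fun y hyr => hfZ y (mem_filter.2 ⟨?_, hyr⟩)⟩
  obtain ⟨e, he⟩ := card_pos.1 (hyr ▸ hr : 0 < degY F y)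
  exact (mem_filter.1 he).2 ▸ mem_image_of_mem _ (mem_filter.1 he).1

lemma exists_matching_covering_maxDegree (F : Finset (α × β)) {r : ℕ} (hr : 0 < r)
    (hx : ∀ e ∈ F, degX F e.1 = r) (hy : ∀ y, degY F y ≤ r) :
    ∃ M ⊆ F, (∀ e ∈ F, degX M e.1 = 1) ∧ (∀ y, degY M y ≤ 1) ∧
      ∀ y, degY F y = r → degY M y = 1 := by
  obtain ⟨f, hf, hfF, hfull⟩ := exists_injective_nbhd_covering_maxDegree F hr hx hy
  set M := univ.image fun x : F.image Prod.fst => ((x : α), f x)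
  have mem_M {p : α × β} : p ∈ M ↔ ∃ x : F.image Prod.fst, ((x : α), f x) = p := by
    simp only [M, mem_image, mem_univ, true_and]
  have hMy (y : β) : degY M y ≤ 1 := by
    refine card_le_one.2 fun a ha b hb => ?_
    obtain ⟨⟨x, rfl⟩, hay⟩ := And.imp_left mem_M.1 (mem_filter.1 ha)
    obtain ⟨⟨x', rfl⟩, hby⟩ := And.imp_left mem_M.1 (mem_filter.1 hb)
    obtain rfl : x = x' := hf (hay.trans hby.symm)
    rfl
  refine ⟨M, fun p hp => ?_, fun e he => ?_, hMy, fun y hyr => ?_⟩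
  · obtain ⟨x, rfl⟩ := mem_M.1 hp
    exact hfF x
  · refine card_eq_one.2 ⟨(e.1, f ⟨e.1, mem_image_of_mem _ he⟩), ?_⟩
    ext p
    rw [mem_filter, mem_M, mem_singleton]
    constructor
    · rintro ⟨⟨x, rfl⟩, hxe⟩
      obtain rfl : x = ⟨e.1, mem_image_of_mem _ he⟩ := Subtype.ext hxe
      rfl
    · rintro rfl
      exact ⟨⟨⟨e.1, mem_image_of_mem _ he⟩, rfl⟩, rfl⟩
  · obtain ⟨x, rfl⟩ := hfull y hyr
    exact le_antisymm (hMy _) (card_pos.2 ⟨_, mem_filter.2 ⟨mem_M.2 ⟨x, rfl⟩, rfl⟩⟩)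

/-- König's edge-colouring theorem. -/
theorem exists_isProperOn_Icc (F : Finset (α × β)) (r : ℕ)
    (hx : ∀ e ∈ F, degX F e.1 = r) (hy : ∀ y, degY F y ≤ r) :
    ∃ ψ : α × β → ℕ, (∀ e ∈ F, ψ e ∈ Icc 1 r) ∧ IsProperOn F ψ := by
  induction r generalizing F with
  | zero =>
    obtain rfl : F = ∅ := eq_empty_of_forall_notMem fun e he => by
      have : 0 < degX F e.1 := card_pos.2 ⟨e, mem_filter.2 ⟨he, rfl⟩⟩
      exact this.ne' (hx e he)
    exact ⟨0, by simp, by simp [IsProperOn]⟩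
  | succ r ih =>
    obtain ⟨M, hMF, hMx, hMy, hMfull⟩ := exists_matching_covering_maxDegree F r.succ_pos hx hy
    have hx' : ∀ e ∈ F \ M, degX (F \ M) e.1 = r := fun e he => by
      rw [degX_sdiff hMF, hx e (mem_sdiff.1 he).1, hMx e (mem_sdiff.1 he).1]
      rfl
    have hy' : ∀ y, degY (F \ M) y ≤ r := fun y => by
      rw [degY_sdiff hMF]
      by_cases hfull : degY F y = r + 1
      · rw [hfull, hMfull y hfull]
        rfl
      · have := hy y
        omega
    obtain ⟨ψ, hψ, hproper⟩ := ih (F \ M) hx' hy'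
    have hψ' {e} (he : e ∈ F) (heM : e ∉ M) : ψ e ≤ r :=
      (mem_Icc.1 (hψ e (mem_sdiff.2 ⟨he, heM⟩))).2
    refine ⟨fun e => if e ∈ M then r + 1 else ψ e, fun e he => ?_,
      fun e he e' he' hne hadj => ?_⟩
    · by_cases heM : e ∈ M
      · simp [heM]
      · simp only [heM, if_false]
        exact Icc_subset_Icc_right r.le_succ (hψ e (mem_sdiff.2 ⟨he, heM⟩))
    · by_cases heM : e ∈ M <;> by_cases he'M : e' ∈ M <;>
        simp only [heM, he'M, if_true, if_false]
      · refine absurd (hadj.elim (fun h => ?_) fun h => ?_) hne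
        · exact card_le_one.1 (hMx e (hMF heM)).le e (mem_filter.2 ⟨heM, rfl⟩) e'
            (mem_filter.2 ⟨he'M, h.symm⟩)
        · exact card_le_one.1 (hMy e.2) e (mem_filter.2 ⟨heM, rfl⟩) e'
            (mem_filter.2 ⟨he'M, h.symm⟩)
      · exact (Nat.lt_succ_of_le (hψ' he' he'M)).ne'
      · exact (Nat.lt_succ_of_le (hψ' he heM)).ne
      · exact hproper e (mem_sdiff.2 ⟨he, heM⟩) e' (mem_sdiff.2 ⟨he', he'M⟩) hne hadj

end Konig

section Spectrum

variable {α β : Type*} [DecidableEq α] {E : Finset (α × β)}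

lemma spectX_eq_Icc {ψ : α × β → ℕ} {r : ℕ} {x : α} (hψ : ∀ e ∈ E, ψ e ∈ Icc 1 r)
    (hinj : Set.InjOn ψ ({e ∈ E | e.1 = x} : Finset (α × β))) (hx : degX E x = r) :
    spectX E ψ x = Icc 1 r := by
  refine eq_of_subset_of_card_le (fun c hc => ?_) ?_
  · obtain ⟨e, he, rfl⟩ := mem_image.1 hc
    exact hψ e (mem_filter.1 he).1
  · rw [Nat.card_Icc, spectX, card_image_of_injOn hinj, ← degX, hx, Nat.add_sub_cancel]

lemma spectX_comp {φ ψ : α × β → ℕ} {x : α} {g : ℕ → ℕ}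
    (h : ∀ e ∈ E, e.1 = x → φ e = g (ψ e)) : spectX E φ x = (spectX E ψ x).image g := by
  rw [spectX, spectX, image_image]
  exact image_congr fun e he => h e (mem_filter.1 he).1 (mem_filter.1 he).2

lemma isProperEdgeColoring_of_spectX {φ : α × β → ℕ} {t : ℕ} (hproper : IsProperOn E φ)
    (hsub : ∀ x, spectX E φ x ⊆ Icc 1 t) (hcover : ∀ c ∈ Icc 1 t, ∃ x, c ∈ spectX E φ x) :
    IsProperEdgeColoring E t φ := by
  refine ⟨fun e he => hsub e.1 (mem_image_of_mem _ (mem_filter.2 ⟨he, rfl⟩)), fun c hc => ?_,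
    hproper⟩
  obtain ⟨x, hx⟩ := hcover c hc
  obtain ⟨e, he, rfl⟩ := mem_image.1 hx
  exact ⟨e, (mem_filter.1 he).1, rfl⟩

end Spectrum

lemma isIntervalFinset_Icc {a b : ℕ} (h : a ≤ b) : IsIntervalFinset (Icc a b) :=
  ⟨nonempty_Icc.2 h, fun _ ha _ hb _ hac hcb =>
    mem_Icc.2 ⟨(mem_Icc.1 ha).1.trans hac, hcb.trans (mem_Icc.1 hb).2⟩⟩

lemma exists_groupwise_coloring {α β κ : Type*} [Fintype α] [DecidableEq α] [DecidableEq β]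
    [DecidableEq κ] (E : Finset (α × β)) {l : ℕ} (hdX : ∀ x, degX E x = l) (gr : α → κ)
    (hgr : ∀ c, #{x | gr x = c} ≤ l) :
    ∃ ψ : α × β → ℕ, (∀ e ∈ E, ψ e ∈ Icc 1 l) ∧ (∀ x, spectX E ψ x = Icc 1 l) ∧
      ∀ e ∈ E, ∀ e' ∈ E, e ≠ e' → gr e.1 = gr e'.1 → (e.1 = e'.1 ∨ e.2 = e'.2) →
        ψ e ≠ ψ e' := by
  have hcol (c : κ) : ∃ ψ : α × β → ℕ, (∀ e ∈ E, gr e.1 = c → ψ e ∈ Icc 1 l) ∧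
      IsProperOn {e ∈ E | gr e.1 = c} ψ := by
    set F := {e ∈ E | gr e.1 = c}
    have hx : ∀ e ∈ F, degX F e.1 = l := fun e he => by
      rw [← hdX e.1, degX, degX, filter_filter]
      congr 1
      exact filter_congr fun e' _ => ⟨And.right, fun h => ⟨h ▸ (mem_filter.1 he).2, h⟩⟩
    have hy (y : β) : degY F y ≤ l := by
      refine (card_le_card_of_injOn Prod.fst (fun e he => ?_)
        fun e he e' he' h => ?_).trans (hgr c)
      · simp only [F, coe_filter, mem_filter, Set.mem_ofPred_eq] at he
        simpa using he.1.2
      · simp only [F, coe_filter, mem_filter, Set.mem_ofPred_eq] at he he'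
        exact Prod.ext h (he.2.trans he'.2.symm)
    obtain ⟨ψ, hψ, hproper⟩ := exists_isProperOn_Icc F l hx hy
    exact ⟨ψ, fun e he hc => hψ e (mem_filter.2 ⟨he, hc⟩), hproper⟩
  choose Ψ hΨ hproper using hcol
  have hrange : ∀ e ∈ E, Ψ (gr e.1) e ∈ Icc 1 l := fun e he => hΨ _ e he rfl
  have hproper' : ∀ e ∈ E, ∀ e' ∈ E, e ≠ e' → gr e.1 = gr e'.1 → (e.1 = e'.1 ∨ e.2 = e'.2) →
      Ψ (gr e.1) e ≠ Ψ (gr e'.1) e' := fun e he e' he' hne hgr hadj => by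
    rw [← hgr]
    exact hproper _ e (mem_filter.2 ⟨he, rfl⟩) e' (mem_filter.2 ⟨he', hgr.symm⟩) hne hadj
  refine ⟨fun e => Ψ (gr e.1) e, hrange, fun x => spectX_eq_Icc hrange ?_ (hdX x), hproper'⟩
  intro e he e' he' h
  by_contra hne
  rw [coe_filter] at he he'
  exact hproper' e he.1 e' he'.1 hne (by rw [he.2, he'.2]) (.inl (he.2.trans he'.2.symm)) h

section Stacking

variable {l d : ℕ}

/-- Where colour `c ∈ [1, l]` of group `b` is sent: group `b ≥ 1` is translated to
`[l b + d + 1, l b + d + l]`, group `0` keeps `[1, l]`, except for a vertex marked `rot`, whose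
colours `≤ d` are raised by `l`, so that it fills `[d + 1, d + l]`. -/
def stackedColor (l d b : ℕ) (rot : Prop) [Decidable rot] (c : ℕ) : ℕ :=
  if b = 0 then (if rot then (if c ≤ d then c + l else c) else c) else l * b + d + c

def stackStart (l d b : ℕ) (rot : Prop) [Decidable rot] : ℕ :=
  if b = 0 then (if rot then d else 0) else l * b + d

lemma image_stackedColor_Icc (hd : d ≤ l) (b : ℕ) (rot : Prop) [Decidable rot] :
    (Icc 1 l).image (stackedColor l d b rot) =
      Icc (stackStart l d b rot + 1) (stackStart l d b rot + l) := by
  ext c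
  simp only [mem_image, mem_Icc, stackedColor, stackStart]
  constructor
  · rintro ⟨a, ha, rfl⟩
    split_ifs <;> omega
  · intro hc
    split_ifs at hc with hb hrot
    · exact ⟨if c ≤ l then c else c - l, by split_ifs <;> omega⟩
    · exact ⟨c, by split_ifs; omega⟩
    · exact ⟨c - (l * b + d), by split_ifs; omega⟩

lemma stackedColor_ne {b a a' : ℕ} (rot rot' : Prop) [Decidable rot] [Decidable rot']
    (ha : a ∈ Icc 1 l) (ha' : a' ∈ Icc 1 l) (h : a ≠ a') :
    stackedColor l d b rot a ≠ stackedColor l d b rot' a' := by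
  rw [mem_Icc] at ha ha'
  unfold stackedColor
  split_ifs <;> omega

lemma stackedColor_lt {b b' a a' : ℕ} (rot rot' : Prop) [Decidable rot] [Decidable rot']
    (hb : b < b') (ha : a ≤ l) (ha' : 1 ≤ a') :
    stackedColor l d b rot a < stackedColor l d b' rot' a' := by
  have h : l * (b + 1) ≤ l * b' := Nat.mul_le_mul_left l hb
  rw [mul_add, mul_one] at h
  unfold stackedColor
  split_ifs <;> omega

lemma stackStart_add_le {b q : ℕ} (rot : Prop) [Decidable rot] (hb : b < q) :
    stackStart l d b rot + l ≤ l * q + d := by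
  have h : l * (b + 1) ≤ l * q := Nat.mul_le_mul_left l hb
  rw [mul_add, mul_one] at h
  unfold stackStart
  split_ifs <;> omega

lemma exists_mem_Icc_stackStart {α : Type*} [DecidableEq α] {q : ℕ} (gr : α → ℕ) (hd : d ≤ l)
    (hgr_surj : ∀ c < q, ∃ x, gr x = c) {u : α} (hu : gr u = 0)
    (hv : 0 < d → ∃ v ≠ u, gr v = 0) {c : ℕ} (hc : c ∈ Icc 1 (l * q + d)) :
    ∃ x, c ∈ Icc (stackStart l d (gr x) (x = u) + 1) (stackStart l d (gr x) (x = u) + l) := by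
  rw [mem_Icc] at hc
  by_cases hcd : c ≤ d
  · obtain ⟨v, hvu, hv0⟩ := hv (by omega)
    refine ⟨v, mem_Icc.2 ?_⟩
    simp only [stackStart, hv0, hvu, if_true, if_false]
    omega
  by_cases hcl : c ≤ l + d
  · refine ⟨u, mem_Icc.2 ?_⟩
    simp only [stackStart, hu, if_true]
    omega
  have hl : 0 < l := Nat.pos_of_ne_zero fun hl => by simp [hl] at hc hcl; omega
  obtain ⟨b, r, hbr, hr⟩ : ∃ b r, l * b + r = c - d - 1 ∧ r < l :=
    ⟨_, _, Nat.div_add_mod _ _, Nat.mod_lt _ hl⟩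
  have hb0 : b ≠ 0 := by
    rintro rfl
    omega
  have hbq : b < q := lt_of_not_ge fun hqb => by
    have := Nat.mul_le_mul_left l hqb
    omega
  obtain ⟨x, rfl⟩ := hgr_surj b hbq
  refine ⟨x, mem_Icc.2 ?_⟩
  simp only [stackStart, hb0, if_false]
  omega

end Stacking

theorem exists_intervalColoring_of_grouping {α β : Type*} [Fintype α] [DecidableEq α]
    [DecidableEq β] (E : Finset (α × β)) {l d q : ℕ} (hdX : ∀ x, degX E x = l) (hd : d ≤ l)
    (gr : α → ℕ) (hgr_lt : ∀ x, gr x < q) (hgr_surj : ∀ c < q, ∃ x, gr x = c)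
    (hgr_card : ∀ c, #{x | gr x = c} ≤ l) {u : α} (hu : gr u = 0)
    (hv : 0 < d → ∃ v ≠ u, gr v = 0) :
    ∃ φ : α × β → ℕ, IsProperEdgeColoring E (l * q + d) φ ∧ IntervalOnX E φ := by
  obtain ⟨ψ, hψ, hspecψ, hproper⟩ := exists_groupwise_coloring E hdX gr hgr_card
  set φ : α × β → ℕ := fun e => stackedColor l d (gr e.1) (e.1 = u) (ψ e)
  have hspec (x : α) : spectX E φ x =
      Icc (stackStart l d (gr x) (x = u) + 1) (stackStart l d (gr x) (x = u) + l) := by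
    rw [spectX_comp (g := stackedColor l d (gr x) (x = u)) fun e _ hex => by rw [← hex],
      hspecψ x, image_stackedColor_Icc hd]
  refine ⟨φ, isProperEdgeColoring_of_spectX (fun e he e' he' hne hadj => ?_) (fun x => ?_)
    fun c hc => ?_, fun x hne => ?_⟩
  · have ha := hψ e he
    have ha' := hψ e' he'
    rcases lt_trichotomy (gr e.1) (gr e'.1) with hlt | heq | hgt
    · exact (stackedColor_lt _ _ hlt (mem_Icc.1 ha).2 (mem_Icc.1 ha').1).ne
    · simp only [φ, ← heq]
      exact stackedColor_ne _ _ ha ha' (hproper e he e' he' hne heq hadj)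
    · exact (stackedColor_lt _ _ hgt (mem_Icc.1 ha').2 (mem_Icc.1 ha).1).ne'
  · rw [hspec]
    exact Icc_subset_Icc (Nat.le_add_left 1 _) (stackStart_add_le _ (hgr_lt x))
  · obtain ⟨x, hx⟩ := exists_mem_Icc_stackStart gr hd hgr_surj hu hv hc
    exact ⟨x, hspec x ▸ hx⟩
  · rw [hspec] at hne ⊢
    exact isIntervalFinset_Icc (nonempty_Icc.1 hne)

lemma card_filter_mod_eq_le {ι : Type*} [Fintype ι] {idx : ι → ℕ}
    (hinj : Function.Injective idx) {m l q : ℕ} (hlt : ∀ x, idx x < m) (hmq : m ≤ l * q)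
    (c : ℕ) : #{x | idx x % q = c} ≤ l := by
  refine (card_le_card_of_injOn (fun x => idx x / q) (fun x _ => ?_)
    fun x hx y hy hdiv => ?_).trans (card_range l).le
  · have hq : 0 < q := Nat.pos_of_ne_zero fun hq => by
      simp only [hq, mul_zero, nonpos_iff_eq_zero] at hmq
      exact absurd (hlt x) (by omega)
    exact mem_range.2 ((Nat.div_lt_iff_lt_mul hq).2 ((hlt x).trans_le hmq))
  · simp only [coe_filter, mem_univ, true_and, Set.mem_ofPred_eq] at hx hy
    have h := Nat.div_add_mod (idx x) q
    rw [show idx x / q = idx y / q from hdiv, hx, ← hy, Nat.div_add_mod] at h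
    exact hinj h.symm

lemma le_mul_of_mul_ceilDiv_le {m l q d : ℕ} (hl : 0 < l) (hd : d < l)
    (h : l * ((m + l - 1) / l) ≤ l * q + d) : m ≤ l * q := by
  have hceil : (m + l - 1) / l < q + 1 :=
    Nat.lt_of_mul_lt_mul_left (a := l) (by rw [mul_add, mul_one]; omega)
  have := Nat.lt_mul_div_succ (m + l - 1) hl
  have := Nat.mul_le_mul_left l (Nat.lt_succ_iff.1 hceil)
  rw [mul_add, mul_one] at *
  omega

theorem stmt14_general {α β : Type*} [Fintype α] [DecidableEq α] [DecidableEq β]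
    (E : Finset (α × β)) (m l : ℕ)
    (hm : 0 < m) (hl : 0 < l)
    (hcardX : Fintype.card α = m)
    (hdX : ∀ x : α, degX E x = l) :
    ∀ t : ℕ, l * ((m + l - 1) / l) ≤ t → t ≤ m * l →
      ∃ φ : α × β → ℕ, IsProperEdgeColoring E t φ ∧ IntervalOnX E φ := by
  intro t ht1 ht2
  obtain ⟨q, d, rfl, hdl⟩ : ∃ q d, l * q + d = t ∧ d < l :=
    ⟨_, _, Nat.div_add_mod t l, Nat.mod_lt t hl⟩
  have hmq : m ≤ l * q := le_mul_of_mul_ceilDiv_le hl hdl ht1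
  have hq : 0 < q := Nat.pos_of_ne_zero fun hq => by simp [hq] at hmq; omega
  have hqm : q ≤ m := Nat.le_of_mul_le_mul_left (by rw [mul_comm l m]; omega) hl
  have hqm' (hd : 0 < d) : q < m := lt_of_le_of_ne hqm fun h => by
    rw [h, mul_comm] at ht2
    omega
  let i := Fintype.equivFinOfCardEq hcardX
  refine exists_intervalColoring_of_grouping E hdX hdl.le (fun x => (i x : ℕ) % q)
    (fun x => Nat.mod_lt _ hq) (fun c hc => ⟨i.symm ⟨c, hc.trans_le hqm⟩, ?_⟩)
    (card_filter_mod_eq_le (fun x y h => i.injective (Fin.ext h)) (fun x => (i x).2) hmq)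
    (u := i.symm ⟨0, hm⟩) (by simp) fun hd => ⟨i.symm ⟨q, hqm' hd⟩, ?_, by simp⟩
  · simp [Nat.mod_eq_of_lt hc]
  · simp [hq.ne']

/-- For an `(l,k)`-biregular bipartite graph (`|X| = m`,
`|Y| = n`, `m ≥ n`, `ml = nk`) and every `t` with `l·⌈m/l⌉ ≤ t ≤ ml`, there
is a proper edge `t`-coloring interval on `X`. -/
theorem stmt14 {α β : Type*} [Fintype α] [Fintype β] [DecidableEq α] [DecidableEq β]
    (E : Finset (α × β)) (m n l k : ℕ)
    (hm : 0 < m) (hn : 0 < n) (hl : 0 < l) (hk : 0 < k)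
    (hcardX : Fintype.card α = m) (hcardY : Fintype.card β = n)
    (hdX : ∀ x : α, degX E x = l) (hdY : ∀ y : β, degY E y = k)
    (hnm : n ≤ m) (hml : m * l = n * k) :
    ∀ t : ℕ, l * ((m + l - 1) / l) ≤ t → t ≤ m * l →
      ∃ φ : α × β → ℕ, IsProperEdgeColoring E t φ ∧ IntervalOnX E φ :=
  stmt14_general E m l hm hl hcardX hdX
end

section
/- Let φ be a proper edge t-coloring of K_{m,n} (parts X of size m, Y of size n, m ≥ n) which is interval on X, with the vertices x_1,...,x_m of X ordered so that min S(x_1,φ) ≤ ... ≤ min S(x_m,φ). Then the (0,1)-matrix P with m rows and t columns defined by p_{ij} = 1 iff color j ∈ S(x_i,φ) is a collected n-regular n-compressed matrix. -/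
/-- Entries of the (0,1)-matrix (represented by its set of ones, as a Boolean
function on 1-based indices) lie within the index range `[1,m] × [1,w]`. -/
def Matrix01 (P : ℕ → ℕ → Bool) (m w : ℕ) : Prop :=
  ∀ i j, P i j = true → 1 ≤ i ∧ i ≤ m ∧ 1 ≤ j ∧ j ≤ w

/-- `eps P i` = the index of the first one in row `i` (the quantity `ε(i,P)`). -/
noncomputable def eps (P : ℕ → ℕ → Bool) (i : ℕ) : ℕ :=
  sInf {j | P i j = true}

/-- Every row in range is collected: its ones form a nonempty set of
consecutive indices. -/
def RowsCollected (P : ℕ → ℕ → Bool) (m : ℕ) : Prop :=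
  ∀ i, 1 ≤ i → i ≤ m →
    (∃ j, P i j = true) ∧
    ∀ p q r, P i p = true → P i q = true → p ≤ r → r ≤ q → P i r = true

/-- Every column in range is collected. -/
def ColsCollected (P : ℕ → ℕ → Bool) (w : ℕ) : Prop :=
  ∀ j, 1 ≤ j → j ≤ w →
    (∃ i, P i j = true) ∧
    ∀ p q r, P p j = true → P q j = true → p ≤ r → r ≤ q → P r j = true

/-- `P` is a collected matrix with `m` rows and `w` columns. -/
def CollectedMatrix (P : ℕ → ℕ → Bool) (m w : ℕ) : Prop :=
  Matrix01 P m w ∧ RowsCollected P m ∧ ColsCollected P w ∧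
  P 1 1 = true ∧ P m w = true ∧
  ∀ i i', 1 ≤ i → i ≤ i' → i' ≤ m → eps P i ≤ eps P i'

/-- `P` is `n`-regular: every row has exactly `n` ones. -/
def RowRegular (P : ℕ → ℕ → Bool) (m w n : ℕ) : Prop :=
  ∀ i, 1 ≤ i → i ≤ m → ((Finset.Icc 1 w).filter (fun j => P i j = true)).card = n

/-- `P` is `c`-compressed: every column has at most `c` ones. -/
def ColCompressed (P : ℕ → ℕ → Bool) (m w c : ℕ) : Prop :=
  ∀ j, 1 ≤ j → j ≤ w → ((Finset.Icc 1 m).filter (fun i => P i j = true)).card ≤ c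

/-- Let `φ` be a proper edge `t`-coloring of `K_{m,n}` interval
on the part `X = Fin m`, with the vertices of `X` ordered so that the minima
of their spectra are nondecreasing. Then the `m × t` (0,1)-matrix `P` with
`p_{ij} = 1` iff color `j` lies in the spectrum of the `i`-th vertex of `X`
is a collected `n`-regular `n`-compressed matrix. -/
theorem stmt16 (m n t : ℕ) (hn : 1 ≤ n) (hnm : n ≤ m)
    (φ : Fin m × Fin n → ℕ)
    (hφ : IsProperEdgeColoring (Finset.univ : Finset (Fin m × Fin n)) t φ)
    (hint : IntervalOnX (Finset.univ : Finset (Fin m × Fin n)) φ)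
    (hord : ∀ i i' : Fin m, i ≤ i' →
      sInf ((spectX (Finset.univ : Finset (Fin m × Fin n)) φ i : Set ℕ)) ≤
      sInf ((spectX (Finset.univ : Finset (Fin m × Fin n)) φ i' : Set ℕ)))
    (P : ℕ → ℕ → Bool)
    (hP : ∀ i j, P i j =
      if h : 1 ≤ i ∧ i ≤ m ∧ 1 ≤ j ∧ j ≤ t then
        decide (j ∈ spectX (Finset.univ : Finset (Fin m × Fin n)) φ ⟨i - 1, by omega⟩)
      else false) :
    CollectedMatrix P m t ∧ RowRegular P m t n ∧ ColCompressed P m t n := by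
  classical
  obtain ⟨hrange, hused, hproper⟩ := hφ
  have hm : 1 ≤ m := le_trans hn hnm
  set S : Fin m → Finset ℕ := spectX (Finset.univ : Finset (Fin m × Fin n)) φ with hSdef
  -- proper coloring: equal colors on adjacent edges force equal edges
  have hinj : ∀ (e e' : Fin m × Fin n), (e.1 = e'.1 ∨ e.2 = e'.2) → φ e = φ e' → e = e' := by
    intro e e' hsh heq
    by_contra hne'
    exact hproper e (Finset.mem_univ _) e' (Finset.mem_univ _) hne' hsh heq
  -- membership characterization of spectra
  have hmemS : ∀ (x : Fin m) (j : ℕ), j ∈ S x ↔ ∃ y : Fin n, φ (x, y) = j := by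
    intro x j
    rw [hSdef]
    simp only [spectX, Finset.mem_image, Finset.mem_filter, Finset.mem_univ, true_and]
    constructor
    · rintro ⟨⟨x', y⟩, h1, h2⟩
      simp only at h1
      subst h1
      exact ⟨y, h2⟩
    · rintro ⟨y, hy⟩
      exact ⟨(x, y), rfl, hy⟩
  have hcard : ∀ x, (S x).card = n := by
    intro x
    have h1' : S x = Finset.image (fun y : Fin n => φ (x, y)) Finset.univ := by
      ext j
      rw [hmemS]
      simp only [Finset.mem_image, Finset.mem_univ, true_and]
    rw [h1', Finset.card_image_of_injOn, Finset.card_univ, Fintype.card_fin]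
    intro y _ y' _ hyy
    have := hinj (x, y) (x, y') (Or.inl rfl) hyy
    exact congrArg Prod.snd this
  have hne : ∀ x, (S x).Nonempty := by
    intro x
    apply Finset.card_pos.mp
    rw [hcard]; omega
  have hsub : ∀ x, ∀ j ∈ S x, j ∈ Finset.Icc 1 t := by
    intro x j hj
    obtain ⟨y, hy⟩ := (hmemS x j).mp hj
    have := hrange (x, y) (Finset.mem_univ _)
    rwa [hy] at this
  have hnt : n ≤ t := by
    have h0m : 0 < m := by omega
    have := Finset.card_le_card (fun j hj => hsub ⟨0, h0m⟩ j hj)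
    rw [hcard, Nat.card_Icc] at this
    omega
  set a : Fin m → ℕ := fun x => (S x).min' (hne x) with ha_def
  have hIcc : ∀ x, S x = Finset.Icc (a x) (a x + (n - 1)) := by
    intro x
    obtain ⟨-, hconv⟩ := hint x (hne x)
    set b := (S x).max' (hne x) with hbdef
    have hbmem : b ∈ S x := Finset.max'_mem _ _
    have hsub2 : S x ⊆ Finset.Icc (a x) b := fun c hc =>
      Finset.mem_Icc.mpr ⟨Finset.min'_le _ _ hc, Finset.le_max' _ _ hc⟩
    have hsup2 : Finset.Icc (a x) b ⊆ S x := by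
      intro c hc
      rw [Finset.mem_Icc] at hc
      exact hconv _ (Finset.min'_mem _ _) _ hbmem c hc.1 hc.2
    have heq : S x = Finset.Icc (a x) b :=
      Finset.Subset.antisymm hsub2 hsup2
    have hcard' : (S x).card = b + 1 - a x := by
      rw [heq, Nat.card_Icc]
    have hle : a x ≤ b := Finset.min'_le _ _ hbmem
    have hmax : b = a x + (n - 1) := by
      have := hcard x; omega
    rw [heq, hmax]
  have hmem : ∀ (x : Fin m) (j : ℕ), j ∈ S x ↔ a x ≤ j ∧ j ≤ a x + (n - 1) := by
    intro x j
    rw [hIcc x, Finset.mem_Icc]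
  have ha1 : ∀ x, 1 ≤ a x := by
    intro x
    have := hsub x _ (Finset.min'_mem (S x) (hne x))
    rw [Finset.mem_Icc] at this
    exact this.1
  have hat : ∀ x, a x + (n - 1) ≤ t := by
    intro x
    have hmem' : a x + (n - 1) ∈ S x := (hmem x _).mpr ⟨Nat.le_add_right _ _, le_rfl⟩
    have := hsub x _ hmem'
    rw [Finset.mem_Icc] at this
    exact this.2
  have hsInf : ∀ x, sInf ((S x : Set ℕ)) = a x := by
    intro x
    have hne2 : ((S x : Set ℕ)).Nonempty := ⟨a x, Finset.mem_coe.mpr (Finset.min'_mem _ _)⟩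
    have h1 := Nat.sInf_mem hne2
    exact le_antisymm (Nat.sInf_le (Finset.mem_coe.mpr (Finset.min'_mem _ _)))
      (Finset.min'_le _ _ (Finset.mem_coe.mp h1))
  have hmono : ∀ x x' : Fin m, x ≤ x' → a x ≤ a x' := by
    intro x x' h
    have := hord x x' h
    rwa [hsInf, hsInf] at this
  have hPiff : ∀ i j (h1 : 1 ≤ i) (h2 : i ≤ m), (P i j = true ↔ j ∈ S ⟨i - 1, by omega⟩) := by
    intro i j h1 h2
    rw [hP i j]
    by_cases h : 1 ≤ i ∧ i ≤ m ∧ 1 ≤ j ∧ j ≤ t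
    · rw [dif_pos h, decide_eq_true_eq]
    · rw [dif_neg h]
      simp only [Bool.false_eq_true, false_iff]
      intro hj
      have := hsub _ _ hj
      rw [Finset.mem_Icc] at this
      exact h ⟨h1, h2, this.1, this.2⟩
  set A : ℕ → ℕ := fun i => if h : i < m then a ⟨i, h⟩ else 0 with hAdef
  have hA : ∀ (i : ℕ) (h : i < m), A i = a ⟨i, h⟩ := by
    intro i h
    simp only [hAdef]
    exact dif_pos h
  have hPiff' : ∀ i j, 1 ≤ i → i ≤ m →
      (P i j = true ↔ A (i - 1) ≤ j ∧ j ≤ A (i - 1) + (n - 1)) := by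
    intro i j h1 h2
    have hlt : i - 1 < m := by omega
    rw [hPiff i j h1 h2, hmem, hA (i - 1) hlt]
  have hA1' : ∀ i, i < m → 1 ≤ A i := by
    intro i h; rw [hA i h]; exact ha1 _
  have hAt' : ∀ i, i < m → A i + (n - 1) ≤ t := by
    intro i h; rw [hA i h]; exact hat _
  have hmonoA : ∀ i i', i ≤ i' → i' < m → A i ≤ A i' := by
    intro i i' hle h
    rw [hA i (by omega), hA i' h]
    exact hmono _ _ (Fin.mk_le_mk.mpr hle)
  have hcolA : ∀ j, 1 ≤ j → j ≤ t → ∃ i, i < m ∧ A i ≤ j ∧ j ≤ A i + (n - 1) := by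
    intro j h1 h2
    obtain ⟨e, -, he⟩ := hused j (Finset.mem_Icc.mpr ⟨h1, h2⟩)
    have hjS : j ∈ S e.1 := (hmemS e.1 j).mpr ⟨e.2, he⟩
    refine ⟨e.1.val, e.1.isLt, ?_⟩
    rw [hA e.1.val e.1.isLt]
    have hx : (⟨e.1.val, e.1.isLt⟩ : Fin m) = e.1 := rfl
    rw [hx]
    exact (hmem e.1 j).mp hjS
  have hM : Matrix01 P m t := by
    intro i j h
    rw [hP i j] at h
    by_cases hc : 1 ≤ i ∧ i ≤ m ∧ 1 ≤ j ∧ j ≤ t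
    · exact hc
    · rw [dif_neg hc] at h; simp at h
  have heps : ∀ i, 1 ≤ i → i ≤ m → eps P i = A (i - 1) := by
    intro i h1 h2
    have hset : {j | P i j = true} = Set.Icc (A (i - 1)) (A (i - 1) + (n - 1)) := by
      ext j
      rw [Set.mem_setOf_eq, hPiff' i j h1 h2, Set.mem_Icc]
    show sInf {j | P i j = true} = A (i - 1)
    rw [hset]
    have hne2 : (Set.Icc (A (i - 1)) (A (i - 1) + (n - 1))).Nonempty :=
      ⟨A (i - 1), le_rfl, Nat.le_add_right _ _⟩
    have h3 := Nat.sInf_mem hne2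
    exact le_antisymm (Nat.sInf_le ⟨le_rfl, Nat.le_add_right _ _⟩) h3.1
  refine ⟨⟨hM, ?_, ?_, ?_, ?_, ?_⟩, ?_, ?_⟩
  · -- RowsCollected
    intro i h1 h2
    refine ⟨⟨A (i - 1), ?_⟩, ?_⟩
    · rw [hPiff' i _ h1 h2]
      exact ⟨le_rfl, Nat.le_add_right _ _⟩
    · intro p q r hp hq hpr hrq
      rw [hPiff' i _ h1 h2] at hp hq ⊢
      omega
  · -- ColsCollected
    intro j hj1 hjt
    constructor
    · obtain ⟨i, hilt, hA1, hA2⟩ := hcolA j hj1 hjt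
      refine ⟨i + 1, ?_⟩
      rw [hPiff' (i + 1) j (by omega) (by omega)]
      simpa using And.intro hA1 hA2
    · intro p q r hp hq hpr hrq
      have hpb := hM p j hp
      have hqb := hM q j hq
      rw [hPiff' p j (by omega) (by omega)] at hp
      rw [hPiff' q j (by omega) (by omega)] at hq
      rw [hPiff' r j (by omega) (by omega)]
      have m1 : A (p - 1) ≤ A (r - 1) := hmonoA _ _ (by omega) (by omega)
      have m2 : A (r - 1) ≤ A (q - 1) := hmonoA _ _ (by omega) (by omega)
      omega
  · -- P 1 1
    obtain ⟨i, hilt, hA1, hA2⟩ := hcolA 1 le_rfl (by omega)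
    rw [hPiff' 1 1 le_rfl hm]
    have h0 : A (1 - 1) ≤ A i := hmonoA _ _ (by omega) hilt
    have h1' : 1 ≤ A (1 - 1) := hA1' _ (by omega)
    omega
  · -- P m t
    obtain ⟨i, hilt, hA1, hA2⟩ := hcolA t (by omega) le_rfl
    rw [hPiff' m t hm le_rfl]
    have h0 : A i ≤ A (m - 1) := hmonoA _ _ (by omega) (by omega)
    have h1' : A (m - 1) + (n - 1) ≤ t := hAt' _ (by omega)
    omega
  · -- eps monotone
    intro i i' h1 hii' h2
    rw [heps i h1 (by omega), heps i' (by omega) h2]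
    by_cases hii : i = i'
    · subst hii; exact le_rfl
    · exact hmonoA _ _ (by omega) (by omega)
  · -- RowRegular
    intro i h1 h2
    have hlt : i - 1 < m := by omega
    have e1 := hA1' _ hlt
    have e2 := hAt' _ hlt
    have hflt : (Finset.Icc 1 t).filter (fun j => P i j = true) =
        Finset.Icc (A (i - 1)) (A (i - 1) + (n - 1)) := by
      ext j
      simp only [Finset.mem_filter, Finset.mem_Icc, hPiff' i j h1 h2]
      omega
    rw [hflt, Nat.card_Icc]
    omega
  · -- ColCompressed
    intro j hj1 hjt
    set g : ℕ → Fin n := fun i =>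
      if h : ∃ y : Fin n, ∃ hi : i - 1 < m, φ (⟨i - 1, hi⟩, y) = j then h.choose
      else ⟨0, hn⟩ with hgdef
    have hgspec : ∀ i ∈ (Finset.Icc 1 m).filter (fun i => P i j = true),
        ∃ hi : i - 1 < m, φ (⟨i - 1, hi⟩, g i) = j := by
      intro i hi
      rw [Finset.mem_filter, Finset.mem_Icc] at hi
      obtain ⟨⟨h1, h2⟩, hpij⟩ := hi
      have hlt : i - 1 < m := by omega
      have hjS : j ∈ S ⟨i - 1, hlt⟩ := (hPiff i j h1 h2).mp hpij
      obtain ⟨y, hy⟩ := (hmemS _ j).mp hjS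
      have hex : ∃ y : Fin n, ∃ hi : i - 1 < m, φ (⟨i - 1, hi⟩, y) = j := ⟨y, hlt, hy⟩
      simp only [hgdef]
      rw [dif_pos hex]
      exact hex.choose_spec
    have hginj : Set.InjOn g ((Finset.Icc 1 m).filter (fun i => P i j = true)) := by
      intro i hi i' hi' hgeq
      simp only [Finset.coe_filter, Set.mem_setOf_eq] at hi hi'
      obtain ⟨hlt1, hφ1⟩ := hgspec i (Finset.mem_filter.mpr hi)
      obtain ⟨hlt2, hφ2⟩ := hgspec i' (Finset.mem_filter.mpr hi')
      have heq : ((⟨i - 1, hlt1⟩ : Fin m), g i) = ((⟨i' - 1, hlt2⟩ : Fin m), g i') :=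
        hinj _ _ (Or.inr hgeq) (hφ1.trans hφ2.symm)
      have hv : i - 1 = i' - 1 := congrArg (fun p => (Prod.fst p).val) heq
      rw [Finset.mem_Icc] at hi hi'
      omega
    have hcardle := Finset.card_le_card_of_injOn
      (s := (Finset.Icc 1 m).filter (fun i => P i j = true))
      (t := (Finset.univ : Finset (Fin n))) g
      (fun i _ => Finset.mem_univ (g i)) hginj
    simpa using hcardle
end
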